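/- arXiv:2402.15947 — 2 statements merged into one kernel-verified Lean document; each statement's English description precedes it below -/
import Mathlib

section
/- Let p be a prime, A ⊆ ℚ, and let ⟨A/ℤ⟩ be the subgroup of ℚ/ℤ generated by the image of A. If the group Hom(⟨A/ℤ⟩, 𝔽̄_p^×) is finite of cardinality N, then A ⊆ (1/N)·ℤ[1/p]. -/
/-!
Write the denominator of `q ∈ A` as `p ^ e * m` with `p ∤ m`. The image `x` of `q` in `ℚ/ℤ`
has order `q.den`, and `𝔽̄_p^×` contains an element `u` of order `m`; since `𝔽̄_p^×` is
divisible, hence an injective `ℤ`-module, the character `x ↦ u` of `⟨x⟩` extends to all of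
`⟨A/ℤ⟩`. Its order, a multiple of `m`, divides `N`, so `q = q.num * (N / m) * p ^ (-e) / N`.
-/

/-- `(1/N)·ℤ[1/p]` as a set of rationals. -/
def padicFracSet (p : ℕ) (N : ℕ) : Set ℚ :=
  {q : ℚ | ∃ a v : ℤ, q = (a : ℚ) * (p : ℚ) ^ v / (N : ℚ)}

namespace IsAlgClosed

variable {K : Type*} [Field K] [IsAlgClosed K]

theorem units_pow_surjective {n : ℕ} (hn : n ≠ 0) :
    Function.Surjective (fun u : Kˣ ↦ u ^ n) := by
  intro u
  obtain ⟨z, hz⟩ := exists_pow_nat_eq (u : K) (Nat.pos_of_ne_zero hn)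
  have hz0 : z ≠ 0 := by
    rintro rfl
    exact u.ne_zero (by rw [← hz, zero_pow hn])
  exact ⟨Units.mk0 z hz0, Units.ext hz⟩

variable (K) in
noncomputable instance divisibleByAdditiveUnits : DivisibleBy (Additive Kˣ) ℤ :=
  @AddGroup.divisibleByIntOfDivisibleByNat _ _ <|
    divisibleByOfSMulRightSurj _ _ units_pow_surjective

theorem exists_orderOf_eq {n : ℕ} (hn : (n : K) ≠ 0) : ∃ u : Kˣ, orderOf u = n := by
  have : NeZero (n : K) := ⟨hn⟩
  obtain ⟨ζ, hζ⟩ := HasEnoughRootsOfUnity.exists_primitiveRoot K n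
  have hζu : IsUnit ζ := hζ.isUnit (NeZero.of_neZero_natCast K).out
  exact ⟨hζu.unit, by rw [← orderOf_units, hζu.unit_spec, ← hζ.eq_orderOf]⟩

end IsAlgClosed

theorem AddMonoidHom.exists_apply_eq_of_divisibleBy {M Q : Type*} [AddCommGroup M]
    [AddCommGroup Q] [DivisibleBy Q ℤ] (x : M) {y : Q} (hy : addOrderOf x • y = 0) :
    ∃ f : M →+ Q, f x = y := by
  let φ := zmultiplesHom M x
  have hker : φ.ker ≤ (zmultiplesHom Q y).ker := fun k hk ↦ by
    obtain ⟨j, rfl⟩ := addOrderOf_dvd_iff_zsmul_eq_zero.mpr hk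
    simp [mul_comm, mul_zsmul, hy]
  obtain ⟨f, hf⟩ := (Module.Baer.of_divisible Q).extension_property_addMonoidHom
    (QuotientAddGroup.kerLift φ) (QuotientAddGroup.kerLift_injective φ)
    (QuotientAddGroup.lift φ.ker _ hker)
  refine ⟨f, ?_⟩
  simpa [φ] using DFunLike.congr_fun hf ((1 : ℤ) : ℤ ⧸ φ.ker)

theorem AddChar.exists_apply_eq_of_divisibleBy {M R : Type*} [AddCommGroup M] [CommGroup R]
    [DivisibleBy (Additive R) ℤ] (x : M) {u : R} (hu : u ^ addOrderOf x = 1) :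
    ∃ χ : AddChar M R, χ x = u := by
  obtain ⟨f, hf⟩ := AddMonoidHom.exists_apply_eq_of_divisibleBy x (y := Additive.ofMul u)
    (by simpa using congrArg Additive.ofMul hu)
  exact ⟨toAddMonoidHomEquiv.symm f, by simp [hf]⟩

theorem AddChar.orderOf_apply_dvd {A M : Type*} [AddMonoid A] [CommMonoid M] (χ : AddChar A M)
    (a : A) : orderOf (χ a) ∣ orderOf χ :=
  orderOf_dvd_of_pow_eq_one <| by rw [← AddChar.pow_apply, pow_orderOf_eq_one, AddChar.one_apply]

theorem mem_padicFracSet_of_ordCompl_den_dvd {p N : ℕ} {q : ℚ} (hN : N ≠ 0)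
    (h : ordCompl[p] q.den ∣ N) : q ∈ padicFracSet p N := by
  set e := q.den.factorization p
  set m := ordCompl[p] q.den
  obtain ⟨c, rfl⟩ := h
  have hden : (q.den : ℚ) = p ^ e * m := by
    exact_mod_cast (Nat.ordProj_mul_ordCompl_eq_self q.den p).symm
  have hp : (p : ℚ) ^ e ≠ 0 := left_ne_zero_of_mul (hden ▸ Nat.cast_ne_zero.mpr q.den_nz)
  have hm : (m : ℚ) ≠ 0 := by exact_mod_cast left_ne_zero_of_mul hN
  have hc : (c : ℚ) ≠ 0 := by exact_mod_cast right_ne_zero_of_mul hN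
  refine ⟨q.num * c, -e, ?_⟩
  conv_lhs => rw [← Rat.num_div_den q, hden]
  rw [zpow_neg, zpow_natCast]
  push_cast
  field_simp

theorem stmt_4 (p : ℕ) [Fact p.Prime] (A : Set ℚ) (N : ℕ)
    (hfin : Finite (AddChar (AddSubgroup.closure ((fun q : ℚ => (q : AddCircle (1 : ℚ))) '' A))
      (AlgebraicClosure (ZMod p))ˣ))
    (hN : Nat.card (AddChar (AddSubgroup.closure ((fun q : ℚ => (q : AddCircle (1 : ℚ))) '' A))
      (AlgebraicClosure (ZMod p))ˣ) = N) :
    A ⊆ padicFracSet p N := by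
  intro q hq
  have hN0 : N ≠ 0 := hN ▸ Nat.card_ne_zero.mpr ⟨inferInstance, hfin⟩
  let x : AddSubgroup.closure ((fun q : ℚ => (q : AddCircle (1 : ℚ))) '' A) :=
    ⟨q, AddSubgroup.subset_closure ⟨q, hq, rfl⟩⟩
  have hx : addOrderOf x = q.den := by
    have : Fact ((0 : ℚ) < 1) := ⟨one_pos⟩
    rw [← AddSubgroup.addOrderOf_coe]
    simpa only [mul_one, Rat.cast_id] using AddCircle.addOrderOf_coe_rat (p := (1 : ℚ)) (q := q)
  obtain ⟨u, hu⟩ := IsAlgClosed.exists_orderOf_eq (K := AlgebraicClosure (ZMod p))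
    (n := ordCompl[p] q.den) <| by
      rw [Ne, CharP.cast_eq_zero_iff _ p]
      exact Nat.not_dvd_ordCompl Fact.out q.den_nz
  obtain ⟨χ, hχ⟩ := AddChar.exists_apply_eq_of_divisibleBy x (u := u) <| by
    rw [← orderOf_dvd_iff_pow_eq_one, hu, hx]
    exact Nat.ordCompl_dvd _ _
  refine mem_padicFracSet_of_ordCompl_den_dvd hN0 ?_
  rw [← hu, ← hχ, ← hN]
  exact (χ.orderOf_apply_dvd x).trans (orderOf_dvd_natCard χ)
end

section
/- Let k be a perfect field of characteristic p, G an ordered abelian group containing ℤ, and consider the Hahn series ring W(k)((t^G)) with coefficients in the Witt vectors W(k). Then the set N = { Σ_g r_g t^g : for every g ∈ G, Σ_{n∈ℤ} r_{g+n} p^n = 0 in W(k) } is a maximal ideal of W(k)((t^G)). -/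
/-!
Write `𝒩` for the set in the statement. On a coset `g + ℤ`, from a base point below the support
of `f`, the sum `Σₙ f_{g+n} pⁿ` is a power series in `p`, and Mathlib's Teichmüller expansion
writes its value as `Σᵢ [aᵢ] pⁱ`. Collecting these digits over all cosets gives a series
`teichmullerRep f` with Teichmüller coefficients and `f - teichmullerRep f ∈ 𝒩`. If nonzero, its
leading coefficient is `[a]` with `a ≠ 0`, a unit of `W(k)`, so it is a unit of the Hahn series
ring. Hence every `f ∉ 𝒩` is congruent to a unit modulo `𝒩`, and since `1 ∉ 𝒩`, `𝒩` is maximal.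
`𝒩` is closed under multiplication because only finitely many terms of the Cauchy product enter
a given partial sum on a coset.
-/

open Finset

theorem sum_range_add_mul_pow_eq_pow_mul {R : Type*} [CommSemiring R] (π : R) {a : ℕ → R} {d : ℕ}
    (ha : ∀ i < d, a i = 0) (N : ℕ) :
    ∑ i ∈ range (d + N), a i * π ^ i = π ^ d * ∑ i ∈ range N, a (d + i) * π ^ i := by
  rw [sum_range_add, sum_eq_zero fun i hi => by rw [ha i (mem_range.1 hi), zero_mul], zero_add,
    mul_sum]
  exact sum_congr rfl fun i _ => by ring

theorem pow_dvd_sum_range_add_sub {R : Type*} [CommRing R] (π : R) (a : ℕ → R) (N e : ℕ) :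
    π ^ N ∣ ∑ i ∈ range (N + e), a i * π ^ i - ∑ i ∈ range N, a i * π ^ i := by
  rw [sum_range_add, add_sub_cancel_left]
  exact dvd_sum fun i _ => ⟨a (N + i) * π ^ i, by ring⟩

theorem Ideal.isMaximal_of_forall_exists_isUnit_sub_mem {R : Type*} [Ring R] {I : Ideal R}
    (h1 : 1 ∉ I) (h : ∀ x ∉ I, ∃ u, IsUnit u ∧ x - u ∈ I) : I.IsMaximal := by
  refine Ideal.isMaximal_iff.2 ⟨h1, fun J x hIJ hx hxJ => ?_⟩
  obtain ⟨u, hu, hxu⟩ := h x hx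
  have huJ : u ∈ J := by simpa using J.sub_mem hxJ (hIJ hxu)
  rw [Ideal.eq_top_of_isUnit_mem J huJ hu]
  exact Submodule.mem_top

theorem HahnSeries.exists_finset_coeff_mul_eq_sum {Γ R : Type*} [AddCommGroup Γ] [PartialOrder Γ]
    [IsOrderedCancelAddMonoid Γ] [NonUnitalNonAssocSemiring R] (x y : HahnSeries Γ R)
    (s : Finset Γ) : ∃ A : Finset Γ, (A : Set Γ) ⊆ x.support ∧
      ∀ g ∈ s, (x * y).coeff g = ∑ a ∈ A, x.coeff a * y.coeff (g - a) := by
  classical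
  refine ⟨s.biUnion fun g => (antidiagonal x.isPWO_support y.isPWO_support g).image Prod.fst,
    fun a ha => ?_, fun g hg => ?_⟩
  · obtain ⟨g, -, ij, hij, rfl⟩ := by simpa only [coe_biUnion, coe_image, Set.mem_iUnion,
      Set.mem_image, mem_coe, exists_prop] using ha
    exact (mem_antidiagonal.1 hij).1
  rw [HahnSeries.coeff_mul]
  refine sum_bij_ne_zero (fun ij _ _ => ij.1) (fun ij hij _ => ?_) (fun ij hij _ ij' hij' _ h => ?_)
    (fun a _ ha => ?_) (fun ij hij _ => ?_)
  · exact mem_biUnion.2 ⟨g, hg, mem_image_of_mem _ hij⟩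
  · obtain ⟨-, -, hg⟩ := mem_antidiagonal.1 hij
    obtain ⟨-, -, hg'⟩ := mem_antidiagonal.1 hij'
    exact Prod.ext h (add_left_cancel (a := ij.1) (by rw [hg, h, hg']))
  · exact ⟨(a, g - a), mem_antidiagonal.2 ⟨left_ne_zero_of_mul ha, right_ne_zero_of_mul ha,
      add_sub_cancel _ _⟩, ha, rfl⟩
  · obtain ⟨-, -, hg⟩ := mem_antidiagonal.1 hij
    rw [← hg, add_sub_cancel_left]

namespace WittVector

variable {p : ℕ} [Fact p.Prime] {k : Type*} [CommRing k] [CharP k p] [PerfectRing k p]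

local notation "𝕎" => WittVector p

noncomputable def teichmullerDigit (n : ℕ) (x : 𝕎 k) : k :=
  ((_root_.frobeniusEquiv k p).symm ^ n) (x.coeff n)

@[simp]
theorem teichmullerDigit_zero (n : ℕ) : teichmullerDigit n (0 : 𝕎 k) = 0 := by
  simp [teichmullerDigit]

theorem pow_dvd_sub_sum_teichmullerDigit (x : 𝕎 k) (N : ℕ) :
    (p : 𝕎 k) ^ N ∣ x - ∑ i ∈ range N, teichmuller p (teichmullerDigit i x) * p ^ i := by
  cases N with
  | zero => simp
  | succ n =>
    rw [Nat.range_succ_eq_Iic]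
    exact dvd_sub_sum_teichmuller_iterateFrobeniusEquiv_coeff x n

theorem teichmullerDigit_eq_of_pow_dvd_sub {n : ℕ} {x y : 𝕎 k}
    (h : (p : 𝕎 k) ^ (n + 1) ∣ x - y) : teichmullerDigit n x = teichmullerDigit n y := by
  rw [← Ideal.mem_span_singleton, mem_span_p_pow_iff_le_coeff_eq_zero,
    ← le_coeff_eq_iff_le_sub_coeff_eq_zero] at h
  rw [teichmullerDigit, teichmullerDigit, h n n.lt_succ_self]

theorem teichmullerDigit_add_pow_mul (n d : ℕ) (x : 𝕎 k) :
    teichmullerDigit (n + d) ((p : 𝕎 k) ^ d * x) = teichmullerDigit n x := by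
  rw [teichmullerDigit, teichmullerDigit, mul_comm, mul_pow_charP_coeff_succ, RingAut.coe_pow,
    RingAut.coe_pow, Function.iterate_add_apply, ← iterate_frobenius,
    (Function.leftInverse_iff_comp.2 (coe_frobeniusEquiv_symm_comp_coe_frobenius k p)).iterate d]

end WittVector

theorem exists_forall_neg_sub_add_notMem {G : Type*} [AddCommGroup G] [LinearOrder G]
    [IsOrderedAddMonoid G] {ι : ℤ →+ G} (hι : StrictMono ι) {S : Set G} (hS : S.IsWF) (g : G) :
    ∃ c : ℕ, ∀ n : ℤ, n < 0 → g - ι c + ι n ∉ S := by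
  set T := S ∩ Set.range fun n : ℤ => g + ι n
  have hT : T.IsWF := hS.mono Set.inter_subset_left
  rcases T.eq_empty_or_nonempty with hT0 | hTne
  · refine ⟨0, fun n _ hn => hT0.subset ⟨hn, n, ?_⟩⟩
    simp
  obtain ⟨-, n₀, hn₀⟩ := hT.min_mem hTne
  refine ⟨n₀.natAbs, fun n hn hnS => hT.not_lt_min hTne ⟨hnS, n - n₀.natAbs, ?_⟩ ?_⟩
  · simp only [map_sub]; abel
  · rw [← hn₀]
    have h : g + ι (n - n₀.natAbs) < g + ι n₀ := add_lt_add_right (hι (by omega)) g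
    simpa only [map_sub, add_sub_assoc, sub_add_eq_add_sub] using h

namespace Poonen

open WittVector
open scoped Pointwise

section CommRing

variable {p : ℕ} [Fact p.Prime] {k : Type*} [CommRing k] {G : Type*} [AddCommGroup G]
  [LinearOrder G] (ι : ℤ →+ G)

local notation "𝕎" => WittVector p

noncomputable def cosetSum (f : HahnSeries G (𝕎 k)) (g : G) (N : ℕ) : 𝕎 k :=
  ∑ i ∈ range N, f.coeff (g + ι i) * (p : 𝕎 k) ^ i

def VanishesBelow (f : HahnSeries G (𝕎 k)) (g : G) : Prop :=
  ∀ n : ℤ, n < 0 → f.coeff (g + ι n) = 0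

def IsNullAt (f : HahnSeries G (𝕎 k)) (g : G) : Prop :=
  ∀ N : ℕ, (p : 𝕎 k) ^ N ∣ cosetSum ι f g N

/-- Membership in `𝒩`. The sum `Σₙ f_{g+n} pⁿ` is tested at base points `g` below the support of
`f` on their coset, where it is the power series `Σᵢ f_{g+i} pⁱ`; that vanishes iff its partial
sums `cosetSum ι f g N` are divisible by `pᴺ`. -/
def IsNull (f : HahnSeries G (𝕎 k)) : Prop :=
  ∀ g : G, VanishesBelow ι f g → IsNullAt ι f g

variable {ι}

theorem VanishesBelow.sub {f : HahnSeries G (𝕎 k)} {g : G} (hf : VanishesBelow ι f g) (c : ℕ) :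
    VanishesBelow ι f (g - ι c) := fun n hn => by
  simpa only [map_sub, sub_add_eq_add_sub, add_sub_assoc] using hf (n - c) (by omega)

theorem cosetSum_add (f h : HahnSeries G (𝕎 k)) (g : G) (N : ℕ) :
    cosetSum ι (f + h) g N = cosetSum ι f g N + cosetSum ι h g N := by
  simp only [cosetSum, HahnSeries.coeff_add, add_mul, sum_add_distrib]

theorem cosetSum_sub (f h : HahnSeries G (𝕎 k)) (g : G) (N : ℕ) :
    cosetSum ι (f - h) g N = cosetSum ι f g N - cosetSum ι h g N := by
  simp only [cosetSum, HahnSeries.coeff_sub, sub_mul, sum_sub_distrib]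

theorem pow_dvd_cosetSum_add_sub (f : HahnSeries G (𝕎 k)) (g : G) (N e : ℕ) :
    (p : 𝕎 k) ^ N ∣ cosetSum ι f g (N + e) - cosetSum ι f g N :=
  pow_dvd_sum_range_add_sub _ _ N e

theorem cosetSum_sub_add {f : HahnSeries G (𝕎 k)} {g : G} (hf : VanishesBelow ι f g) (c N : ℕ) :
    cosetSum ι f (g - ι c) (c + N) = (p : 𝕎 k) ^ c * cosetSum ι f g N := by
  rw [cosetSum, sum_range_add_mul_pow_eq_pow_mul _ _ N, cosetSum]
  · refine congrArg _ (sum_congr rfl fun i _ => ?_)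
    rw [Nat.cast_add, map_add, ← add_assoc, sub_add_cancel]
  · intro i hi
    simpa only [map_sub, sub_add_eq_add_sub, add_sub_assoc, add_comm (ι i)] using
      hf (i - c) (by omega)

theorem sum_Icc_eq_cosetSum (f : HahnSeries G (𝕎 k)) (g : G) (m₀ : ℕ) {m : ℤ}
    (hm : 0 ≤ m + m₀) :
    ∑ n ∈ Icc (-(m₀ : ℤ)) m, f.coeff (g + ι n) * (p : 𝕎 k) ^ (n + m₀).toNat =
      cosetSum ι f (g - ι m₀) ((m + m₀).toNat + 1) := by
  refine sum_nbij' (fun n => (n + m₀).toNat) (fun i => i - m₀) (fun n hn => ?_)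
    (fun i hi => ?_) (fun n hn => ?_) (fun i _ => ?_) (fun n hn => ?_)
  all_goals simp only [mem_Icc, mem_range] at *
  any_goals omega
  rw [Int.toNat_of_nonneg (by omega), map_add]
  abel_nf

variable [CharP k p] [PerfectRing k p] in
theorem teichmullerDigit_cosetSum_eq {f : HahnSeries G (𝕎 k)} {g : G} {c c' : ℕ}
    (hc : VanishesBelow ι f (g - ι c)) (hc' : VanishesBelow ι f (g - ι c')) :
    teichmullerDigit c (cosetSum ι f (g - ι c) (c + 1)) =
      teichmullerDigit c' (cosetSum ι f (g - ι c') (c' + 1)) :=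
  calc teichmullerDigit c (cosetSum ι f (g - ι c) (c + 1))
      _ = teichmullerDigit (c + c') ((p : 𝕎 k) ^ c' * cosetSum ι f (g - ι c) (c + 1)) :=
        (teichmullerDigit_add_pow_mul _ _ _).symm
      _ = teichmullerDigit (c' + c) (cosetSum ι f (g - ι c' - ι c) (c + (c' + 1))) := by
        rw [← cosetSum_sub_add hc, sub_right_comm, add_comm c c', add_left_comm]
      _ = teichmullerDigit c' (cosetSum ι f (g - ι c') (c' + 1)) := by
        rw [cosetSum_sub_add hc', teichmullerDigit_add_pow_mul]

variable [IsOrderedAddMonoid G]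

theorem exists_vanishesBelow (hι : StrictMono ι) (f : HahnSeries G (𝕎 k)) (g : G) :
    ∃ c : ℕ, VanishesBelow ι f (g - ι c) := by
  obtain ⟨c, hc⟩ := exists_forall_neg_sub_add_notMem hι f.isPWO_support.isWF g
  exact ⟨c, fun n hn => Function.notMem_support.1 (hc n hn)⟩

theorem cosetSum_mul (h f : HahnSeries G (𝕎 k)) (g : G) (N : ℕ) :
    ∃ A : Finset G, (A : Set G) ⊆ h.support ∧
      cosetSum ι (h * f) g N = ∑ a ∈ A, h.coeff a * cosetSum ι f (g - a) N := by
  obtain ⟨A, hA, hmul⟩ := h.exists_finset_coeff_mul_eq_sum f ((range N).image fun i : ℕ => g + ι i)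
  refine ⟨A, hA, ?_⟩
  simp only [cosetSum, mul_sum]
  rw [sum_comm]
  refine sum_congr rfl fun i hi => ?_
  rw [hmul _ (mem_image_of_mem _ hi), sum_mul]
  refine sum_congr rfl fun a _ => ?_
  rw [sub_add_eq_add_sub, mul_assoc]

end CommRing

section Field

variable {p : ℕ} [Fact p.Prime] {k : Type*} [Field k] [CharP k p]
  {G : Type*} [AddCommGroup G] [LinearOrder G] {ι : ℤ →+ G}

local notation "𝕎" => WittVector p

theorem isNullAt_of_sub {f : HahnSeries G (𝕎 k)} {g : G} (hf : VanishesBelow ι f g) {c : ℕ}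
    (h : IsNullAt ι f (g - ι c)) : IsNullAt ι f g := fun N => by
  have := h (c + N)
  rwa [cosetSum_sub_add hf, pow_add, mul_dvd_mul_iff_left (pow_ne_zero c (p_nonzero p k))] at this

variable [IsOrderedAddMonoid G]

theorem IsNull.add (hι : StrictMono ι) {f h : HahnSeries G (𝕎 k)} (hf : IsNull ι f)
    (hh : IsNull ι h) : IsNull ι (f + h) := by
  intro g hg
  obtain ⟨c, hc⟩ := exists_forall_neg_sub_add_notMem hι
    (f.isPWO_support.union h.isPWO_support).isWF g
  refine isNullAt_of_sub hg (c := c) fun N => ?_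
  rw [cosetSum_add]
  exact dvd_add (hf _ (fun n hn => Function.notMem_support.1 fun hn' => hc n hn (.inl hn')) N)
    (hh _ (fun n hn => Function.notMem_support.1 fun hn' => hc n hn (.inr hn')) N)

theorem IsNull.mul_left (hι : StrictMono ι) (h : HahnSeries G (𝕎 k)) {f : HahnSeries G (𝕎 k)}
    (hf : IsNull ι f) : IsNull ι (h * f) := by
  intro g hg
  obtain ⟨c, hc⟩ := exists_forall_neg_sub_add_notMem hι
    (h.isPWO_support.add f.isPWO_support).isWF g
  refine isNullAt_of_sub hg (c := c) fun N => ?_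
  obtain ⟨A, hA, hsum⟩ := cosetSum_mul h f (g - ι c) N
  rw [hsum]
  refine dvd_sum fun a ha => dvd_mul_of_dvd_right (hf _ (fun n hn => ?_) N) _
  refine Function.notMem_support.1 fun hn' => hc n hn ⟨a, hA ha, _, hn', ?_⟩
  rw [sub_add_eq_add_sub]
  exact add_sub_cancel _ _

variable (ι) in
def ideal (hι : StrictMono ι) : Ideal (HahnSeries G (𝕎 k)) where
  carrier := {f | IsNull ι f}
  zero_mem' := fun _ _ _ => by simp [cosetSum]
  add_mem' := IsNull.add hι
  smul_mem' := IsNull.mul_left hι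

theorem one_notMem_ideal (hι : StrictMono ι) : 1 ∉ ideal (k := k) ι hι := by
  intro h1
  have hvb : VanishesBelow ι (1 : HahnSeries G (𝕎 k)) 0 := fun n hn => by
    rw [zero_add, HahnSeries.coeff_one, if_neg (by simpa using hι.injective.ne hn.ne)]
  have hp : (p : 𝕎 k) ∣ 1 := by simpa [cosetSum] using h1 0 hvb 1
  exact (WittVector.irreducible p).not_isUnit (isUnit_of_dvd_one hp)

theorem mem_ideal_iff (hι : StrictMono ι) (f : HahnSeries G (𝕎 k)) :
    f ∈ ideal ι hι ↔ ∀ g : G, ∀ M : ℕ, ∃ m₀ : ℕ, ∀ m : ℤ, (m₀ : ℤ) ≤ m →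
      (∑ n ∈ Icc (-(m₀ : ℤ)) m, f.coeff (g + ι n) * (p : 𝕎 k) ^ (n + (m₀ : ℤ)).toNat) ∈
        Ideal.span {(p : 𝕎 k) ^ (M + m₀)} := by
  refine ⟨fun hf g M => ?_, fun hf g hg N => ?_⟩
  · obtain ⟨c, hc⟩ := exists_vanishesBelow hι f g
    have hvb : VanishesBelow ι f (g - ι (c + M : ℕ)) := by
      simpa only [Nat.cast_add, map_add, sub_sub] using hc.sub M
    refine ⟨c + M, fun m hm => ?_⟩
    rw [sum_Icc_eq_cosetSum _ _ _ (by omega), Ideal.mem_span_singleton]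
    exact (pow_dvd_pow _ (by omega)).trans (hf _ hvb _)
  · obtain ⟨m₀, hm₀⟩ := hf g N
    have h := hm₀ (m₀ + N) (by omega)
    rw [sum_Icc_eq_cosetSum _ _ _ (by omega), Ideal.mem_span_singleton,
      show (((m₀ + N : ℤ) + m₀).toNat + 1) = m₀ + (N + (m₀ + 1)) by omega, cosetSum_sub_add hg,
      add_comm N m₀, pow_add, mul_dvd_mul_iff_left (pow_ne_zero _ (p_nonzero p k))] at h
    exact (dvd_sub_right h).1 (pow_dvd_cosetSum_add_sub f g N _)

variable [PerfectRing k p]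

variable (ι) in
/-- The `p⁰`-digit of `Σₙ f_{g+n} pⁿ`, read off as the `pᶜ`-digit of the sum based at `g - c`
(independent of `c` by `teichmullerDigit_cosetSum_eq`). -/
noncomputable def teichmullerCoeff (hι : StrictMono ι) (f : HahnSeries G (𝕎 k)) (g : G) : k :=
  teichmullerDigit (exists_vanishesBelow hι f g).choose
    (cosetSum ι f (g - ι (exists_vanishesBelow hι f g).choose)
      ((exists_vanishesBelow hι f g).choose + 1))

theorem teichmullerCoeff_eq (hι : StrictMono ι) {f : HahnSeries G (𝕎 k)} {g : G} {c : ℕ}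
    (hc : VanishesBelow ι f (g - ι c)) {N : ℕ} (hN : c < N) :
    teichmullerCoeff ι hι f g = teichmullerDigit c (cosetSum ι f (g - ι c) N) := by
  obtain ⟨e, rfl⟩ : ∃ e, N = c + 1 + e := ⟨N - (c + 1), by omega⟩
  rw [teichmullerCoeff, teichmullerDigit_cosetSum_eq (exists_vanishesBelow hι f g).choose_spec hc]
  exact (teichmullerDigit_eq_of_pow_dvd_sub (pow_dvd_cosetSum_add_sub f _ _ e)).symm

theorem mem_support_add_of_teichmullerCoeff_ne_zero (hι : StrictMono ι)
    {f : HahnSeries G (𝕎 k)} {g : G} (h : teichmullerCoeff ι hι f g ≠ 0) :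
    g ∈ f.support + ι '' Set.Ici 0 := by
  obtain ⟨c, hc⟩ := exists_vanishesBelow hι f g
  rw [teichmullerCoeff_eq hι hc c.lt_succ_self] at h
  obtain ⟨i, hi, hfi⟩ := exists_ne_zero_of_sum_ne_zero fun h0 => h (by rw [cosetSum, h0,
    teichmullerDigit_zero])
  refine ⟨_, left_ne_zero_of_mul hfi, ι ((c : ℤ) - i), ⟨(c : ℤ) - i, ?_, rfl⟩, ?_⟩
  · have := mem_range.1 hi; simp only [Set.mem_Ici]; omega
  · simp only [map_sub]; abel

variable (ι) in
noncomputable def teichmullerRep (hι : StrictMono ι) (f : HahnSeries G (𝕎 k)) :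
    HahnSeries G (𝕎 k) where
  coeff g := teichmuller p (teichmullerCoeff ι hι f g)
  isPWO_support' := (f.isPWO_support.add
    ((BddBelow.isWF bddBelow_Ici).isPWO.image_of_monotone hι.monotone)).mono
      ((Function.support_comp_subset (teichmuller_zero p) _).trans
        fun _ => mem_support_add_of_teichmullerCoeff_ne_zero hι)

theorem teichmullerRep_coeff (hι : StrictMono ι) (f : HahnSeries G (𝕎 k)) (g : G) :
    (teichmullerRep ι hι f).coeff g = teichmuller p (teichmullerCoeff ι hι f g) :=
  rfl

theorem sub_teichmullerRep_mem_ideal (hι : StrictMono ι) (f : HahnSeries G (𝕎 k)) :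
    f - teichmullerRep ι hι f ∈ ideal ι hι := by
  intro g hg
  obtain ⟨c, hc⟩ := exists_vanishesBelow hι f g
  refine isNullAt_of_sub hg (c := c) fun N => ?_
  have hrep : cosetSum ι (teichmullerRep ι hι f) (g - ι c) N = ∑ i ∈ range N,
      teichmuller p (teichmullerDigit i (cosetSum ι f (g - ι c) N)) * (p : 𝕎 k) ^ i :=
    sum_congr rfl fun i hi => by
      rw [teichmullerRep_coeff, teichmullerCoeff_eq hι (c := i)
        (by rwa [add_sub_cancel_right]) (mem_range.1 hi), add_sub_cancel_right]
  rw [cosetSum_sub, hrep]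
  exact pow_dvd_sub_sum_teichmullerDigit _ N

theorem isUnit_teichmullerRep (hι : StrictMono ι) {f : HahnSeries G (𝕎 k)}
    (hf : teichmullerRep ι hι f ≠ 0) : IsUnit (teichmullerRep ι hι f) := by
  have hlc := HahnSeries.leadingCoeff_ne_zero.2 hf
  rw [HahnSeries.leadingCoeff_eq, teichmullerRep_coeff] at hlc
  rw [HahnSeries.isUnit_iff, HahnSeries.leadingCoeff_eq, teichmullerRep_coeff]
  exact (Ne.isUnit fun h0 => hlc (by rw [h0, teichmuller_zero])).map (teichmuller p (R := k))

theorem isMaximal_ideal (hι : StrictMono ι) : (ideal (k := k) ι hι).IsMaximal :=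
  Ideal.isMaximal_of_forall_exists_isUnit_sub_mem (one_notMem_ideal hι) fun f hf =>
    ⟨teichmullerRep ι hι f, isUnit_teichmullerRep hι fun h0 => hf (by
      simpa [h0] using sub_teichmullerRep_mem_ideal hι f), sub_teichmullerRep_mem_ideal hι f⟩

end Field

end Poonen

/-- The ideal `𝒩` of Poonen: Hahn series `f` over `W(k)` such that for every `g ∈ G`
the `p`-adically convergent sum `Σ_{n ∈ ℤ} f_{g+n} p^n` vanishes.  The vanishing of the
`p`-adic sum is expressed by saying that, after clearing denominators by `p^{m₀}`
(with `m₀` large enough), all sufficiently long partial sums lie in arbitrarily high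
powers of `(p)`. -/
theorem stmt_6 (p : ℕ) [Fact p.Prime] (k : Type*) [Field k] [CharP k p] [PerfectRing k p]
    (G : Type*) [AddCommGroup G] [LinearOrder G] [IsOrderedAddMonoid G] (ι : ℤ →+ G) (hι : StrictMono ι) :
    ∃ I : Ideal (HahnSeries G (WittVector p k)), I.IsMaximal ∧
      (I : Set (HahnSeries G (WittVector p k))) =
        { f : HahnSeries G (WittVector p k) |
          ∀ g : G, ∀ M : ℕ, ∃ m₀ : ℕ, ∀ m : ℤ, (m₀ : ℤ) ≤ m →
            (∑ n ∈ Finset.Icc (-(m₀ : ℤ)) m,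
                f.coeff (g + ι n) * (p : WittVector p k) ^ (n + (m₀ : ℤ)).toNat)
              ∈ Ideal.span {(p : WittVector p k) ^ (M + m₀)} } :=
  ⟨Poonen.ideal ι hι, Poonen.isMaximal_ideal hι, Set.ext (Poonen.mem_ideal_iff hι)⟩
end
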